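/- Let A and B be n×n positive semidefinite matrices with nonnegative entries, trace 1, and diagonal entries all equal to 1/n. Then for α > 1, S_α((A∘B)/tr(A∘B)) ≥ max(S_α(A), S_α(B)). -/

import Mathlib

open Matrix BigOperators

/-- Matrix-based Rényi α-order entropy: defined via the eigenvalues when the
matrix is Hermitian (junk value 0 otherwise). -/
noncomputable def renyiS {n : ℕ} (α : ℝ) (A : Matrix (Fin n) (Fin n) ℝ) : ℝ :=
  if hA : A.IsHermitian then
    (1 / (1 - α)) * Real.logb 2 (∑ i, (hA.eigenvalues i) ^ α)
  else 0

/-!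
Rescale `B` to the correlation matrix `n • B = Cᴴ * C`, which has unit diagonal. With
`Dₖ = diagonal (C k)` one has `A ⊙ (n • B) = ∑ₖ Dₖᴴ * A * Dₖ` and `∑ₖ Dₖᴴ * Dₖ = ∑ₖ Dₖ * Dₖᴴ = 1`,
so `A ↦ A ⊙ (n • B)` is a unital trace-preserving map. Diagonalizing `A = U Λ Uᴴ` and its image
`M = V Μ Vᴴ` gives `μⱼ = ∑ᵢ Sⱼᵢ λᵢ` with the doubly stochastic `Sⱼᵢ = ∑ₖ ‖(Uᴴ Dₖ V)ᵢⱼ‖²`, hence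
`∑ⱼ μⱼ ^ α ≤ ∑ᵢ λᵢ ^ α` by Jensen. Since `1 / (1 - α) < 0`, the Rényi entropy of the normalized
Hadamard product is at least that of `A`, and by symmetry at least that of `B`.
-/

namespace Matrix

variable {ι ι' κ 𝕜 : Type*} [Fintype ι] [DecidableEq ι] [Fintype κ] [RCLike 𝕜]

theorem sum_map_mulVec_le_of_mem_doublyStochastic {s : Set ℝ} {f : ℝ → ℝ}
    (hf : ConvexOn ℝ s f) {S : Matrix ι ι ℝ} (hS : S ∈ doublyStochastic ℝ ι) {x : ι → ℝ}
    (hx : ∀ i, x i ∈ s) : ∑ j, f ((S *ᵥ x) j) ≤ ∑ i, f (x i) :=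
  calc ∑ j, f ((S *ᵥ x) j) ≤ ∑ j, ∑ i, S j i * f (x i) := by
        gcongr with j
        exact hf.map_sum_le (fun i _ => nonneg_of_mem_doublyStochastic hS)
          (sum_row_of_mem_doublyStochastic hS j) fun i _ => hx i
    _ = ∑ i, f (x i) := by
        rw [Finset.sum_comm]
        simp only [← Finset.sum_mul, sum_col_of_mem_doublyStochastic hS, one_mul]

omit [DecidableEq ι] in
theorem conjTranspose_mul_self_apply_self (X : Matrix ι ι' 𝕜) (j : ι') :
    (Xᴴ * X) j j = ((∑ i, ‖X i j‖ ^ 2 : ℝ) : 𝕜) := by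
  simp [mul_apply, RCLike.conj_mul]

theorem conjTranspose_mul_diagonal_mul_self_apply_self (X : Matrix ι ι' 𝕜) (d : ι → ℝ)
    (j : ι') :
    (Xᴴ * diagonal (RCLike.ofReal ∘ d : ι → 𝕜) * X) j j = ((∑ i, ‖X i j‖ ^ 2 * d i : ℝ) : 𝕜) := by
  rw [mul_apply]
  push_cast
  refine Finset.sum_congr rfl fun i _ => ?_
  rw [mul_diagonal, conjTranspose_apply, Function.comp_apply, ← RCLike.conj_mul]
  simp only [RCLike.star_def]
  ring

omit [DecidableEq ι] in
theorem mul_conjTranspose_self_apply_self (X : Matrix ι' ι 𝕜) (i : ι') :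
    (X * Xᴴ) i i = ((∑ j, ‖X i j‖ ^ 2 : ℝ) : 𝕜) := by
  simp [mul_apply, RCLike.mul_conj]

theorem IsHermitian.exists_mem_doublyStochastic_eigenvalues_eq_mulVec {A M : Matrix ι ι 𝕜}
    (hA : A.IsHermitian) (hM : M.IsHermitian) (K : κ → Matrix ι ι 𝕜)
    (hMK : M = ∑ k, (K k)ᴴ * A * K k) (hK : ∑ k, (K k)ᴴ * K k = 1)
    (hK' : ∑ k, K k * (K k)ᴴ = 1) :
    ∃ S ∈ doublyStochastic ℝ ι, hM.eigenvalues = S *ᵥ hA.eigenvalues := by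
  set U : Matrix ι ι 𝕜 := ↑hA.eigenvectorUnitary
  set V : Matrix ι ι 𝕜 := ↑hM.eigenvectorUnitary
  have hUU : U * Uᴴ = 1 := Unitary.coe_mul_star_self hA.eigenvectorUnitary
  have hUU' : Uᴴ * U = 1 := Unitary.coe_star_mul_self hA.eigenvectorUnitary
  have hVV : V * Vᴴ = 1 := Unitary.coe_mul_star_self hM.eigenvectorUnitary
  have hVV' : Vᴴ * V = 1 := Unitary.coe_star_mul_self hM.eigenvectorUnitary
  have hA_eq : A = U * diagonal (RCLike.ofReal ∘ hA.eigenvalues) * Uᴴ := hA.spectral_theorem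
  have hM_diag : Vᴴ * M * V = diagonal (RCLike.ofReal ∘ hM.eigenvalues) := by
    simpa [star_eq_conjTranspose] using hM.conjStarAlgAut_star_eigenvectorUnitary
  set W : κ → Matrix ι ι 𝕜 := fun k => Uᴴ * K k * V
  have hW_diag : ∑ k, (W k)ᴴ * diagonal (RCLike.ofReal ∘ hA.eigenvalues) * W k
      = Vᴴ * M * V := by
    simp only [W, hA_eq, hMK, conjTranspose_mul, conjTranspose_conjTranspose, Matrix.mul_assoc,
      Matrix.mul_sum, Matrix.sum_mul]
  have hW_row : ∑ k, (W k)ᴴ * W k = 1 := by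
    have h : ∀ k, (W k)ᴴ * W k = Vᴴ * ((K k)ᴴ * (U * Uᴴ) * K k) * V := fun k => by
      simp only [W, conjTranspose_mul, conjTranspose_conjTranspose, Matrix.mul_assoc]
    simp only [h, hUU, Matrix.mul_one, ← Matrix.sum_mul, ← Matrix.mul_sum, hK, hVV']
  have hW_col : ∑ k, W k * (W k)ᴴ = 1 := by
    have h : ∀ k, W k * (W k)ᴴ = Uᴴ * (K k * (V * Vᴴ) * (K k)ᴴ) * U := fun k => by
      simp only [W, conjTranspose_mul, conjTranspose_conjTranspose, Matrix.mul_assoc]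
    simp only [h, hVV, Matrix.mul_one, ← Matrix.sum_mul, ← Matrix.mul_sum, hK', hUU']
  refine ⟨of fun j i => ∑ k, ‖W k i j‖ ^ 2, mem_doublyStochastic_iff_sum.2
    ⟨fun j i => Finset.sum_nonneg fun k _ => sq_nonneg _, fun j => ?_, fun i => ?_⟩,
    funext fun j => ?_⟩
  · have h := congr_fun₂ hW_row j j
    simp only [sum_apply, one_apply_eq, conjTranspose_mul_self_apply_self] at h
    simp only [of_apply]
    rw [Finset.sum_comm]
    exact_mod_cast h
  · have h := congr_fun₂ hW_col i i
    simp only [sum_apply, one_apply_eq, mul_conjTranspose_self_apply_self] at h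
    simp only [of_apply]
    rw [Finset.sum_comm]
    exact_mod_cast h
  · have h := congr_fun₂ (hW_diag.trans hM_diag) j j
    simp only [sum_apply, diagonal_apply_eq, conjTranspose_mul_diagonal_mul_self_apply_self,
      Function.comp_apply] at h
    simp only [mulVec, dotProduct, of_apply, Finset.sum_mul]
    rw [Finset.sum_comm]
    exact_mod_cast h.symm

theorem hadamard_conjTranspose_mul_self_eq_sum (A : Matrix ι ι 𝕜) (C : Matrix κ ι 𝕜) :
    A ⊙ (Cᴴ * C) = ∑ k, (diagonal (C k))ᴴ * A * diagonal (C k) := by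
  ext p q
  simp only [hadamard_apply, sum_apply, diagonal_conjTranspose, mul_diagonal, diagonal_mul]
  rw [mul_apply, Finset.mul_sum]
  exact Finset.sum_congr rfl fun k _ => by simp only [conjTranspose_apply, Pi.star_apply]; ring

theorem sum_conjTranspose_diagonal_mul_diagonal (C : Matrix κ ι 𝕜) :
    ∑ k, (diagonal (C k))ᴴ * diagonal (C k) = diagonal (Cᴴ * C).diag := by
  ext p q
  simp [sum_apply, diagonal_conjTranspose, diagonal_mul_diagonal, diagonal_apply, mul_apply]

open scoped ComplexOrder MatrixOrder in
theorem IsHermitian.sum_map_eigenvalues_hadamard_le {A B : Matrix ι ι 𝕜} (hA : A.IsHermitian)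
    (hB : B.PosSemidef) (hB_diag : ∀ i, B i i = 1) (hAB : (A ⊙ B).IsHermitian) {s : Set ℝ}
    {f : ℝ → ℝ} (hf : ConvexOn ℝ s f) (hs : ∀ i, hA.eigenvalues i ∈ s) :
    ∑ i, f (hAB.eigenvalues i) ≤ ∑ i, f (hA.eigenvalues i) := by
  obtain ⟨C, rfl⟩ := CStarAlgebra.nonneg_iff_eq_star_mul_self.mp hB.nonneg
  rw [star_eq_conjTranspose] at hB_diag hAB
  have hC : ∑ k, (diagonal (C k))ᴴ * diagonal (C k) = 1 := by
    rw [sum_conjTranspose_diagonal_mul_diagonal, ← diagonal_one]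
    exact congrArg diagonal (funext hB_diag)
  have hC' : ∑ k, diagonal (C k) * (diagonal (C k))ᴴ = 1 := by
    simpa only [diagonal_conjTranspose, diagonal_mul_diagonal, mul_comm] using hC
  obtain ⟨S, hS, hS_eig⟩ := hA.exists_mem_doublyStochastic_eigenvalues_eq_mulVec hAB _
    (hadamard_conjTranspose_mul_self_eq_sum A C) hC hC'
  rw [hS_eig]
  exact sum_map_mulVec_le_of_mem_doublyStochastic hf hS hs

open scoped ComplexOrder in
theorem PosSemidef.sum_rpow_eigenvalues_pos {M : Matrix ι ι 𝕜} (hM : M.PosSemidef) (h : M ≠ 0)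
    (α : ℝ) : 0 < ∑ i, hM.isHermitian.eigenvalues i ^ α := by
  obtain ⟨i, hi⟩ := Function.ne_iff.mp (mt hM.isHermitian.eigenvalues_eq_zero_iff.mp h)
  exact Finset.sum_pos' (fun j _ => Real.rpow_nonneg (hM.eigenvalues_nonneg j) α)
    ⟨i, Finset.mem_univ i, Real.rpow_pos_of_pos ((hM.eigenvalues_nonneg i).lt_of_ne' hi) α⟩

end Matrix

section Renyi

variable {n : ℕ} {α : ℝ}

theorem renyiS_of_isHermitian {A : Matrix (Fin n) (Fin n) ℝ} (hA : A.IsHermitian) :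
    renyiS α A = 1 / (1 - α) * Real.logb 2 (∑ i, hA.eigenvalues i ^ α) :=
  dif_pos hA

theorem renyiS_le_renyiS_of_sum_rpow_le {A M : Matrix (Fin n) (Fin n) ℝ} (hA : A.IsHermitian)
    (hM : M.IsHermitian) (hα : 1 ≤ α) (hpos : 0 < ∑ i, hM.eigenvalues i ^ α)
    (hle : ∑ i, hM.eigenvalues i ^ α ≤ ∑ i, hA.eigenvalues i ^ α) :
    renyiS α A ≤ renyiS α M := by
  rw [renyiS_of_isHermitian hA, renyiS_of_isHermitian hM]
  exact mul_le_mul_of_nonpos_left (Real.logb_le_logb_of_le one_lt_two hpos hle)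
    (one_div_nonpos.2 (by linarith))

theorem renyiS_le_renyiS_normalized_hadamard {A B : Matrix (Fin n) (Fin n) ℝ}
    (hA : A.PosSemidef) (hB : B.PosSemidef) (hA_trace : A.trace = 1)
    (hB_diag : ∀ i, B i i = 1 / n) (hα : 1 ≤ α) :
    renyiS α A ≤ renyiS α ((A ⊙ B).trace⁻¹ • (A ⊙ B)) := by
  have hnB : ((n : ℝ) • B).PosSemidef := hB.smul (Nat.cast_nonneg n)
  have hnB_diag : ∀ i, ((n : ℝ) • B) i i = 1 := fun i => by
    simp [hB_diag, (Fin.pos i).ne']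
  have h_normalize : (A ⊙ B).trace⁻¹ • (A ⊙ B) = A ⊙ ((n : ℝ) • B) := by
    have h : (A ⊙ B).trace = A.trace * (1 / n) := by
      simp [trace, hB_diag, Finset.sum_mul]
    rw [h, hA_trace, one_mul, one_div, inv_inv, hadamard_smul]
  have hAB := hA.hadamard hnB
  have h_trace : (A ⊙ ((n : ℝ) • B)).trace = 1 := by
    simpa only [trace, diag_apply, hadamard_apply, hnB_diag, mul_one] using hA_trace
  rw [h_normalize]
  refine renyiS_le_renyiS_of_sum_rpow_le hA.isHermitian hAB.isHermitian hα
    (hAB.sum_rpow_eigenvalues_pos (fun h => by simp [h] at h_trace) α) ?_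
  exact hA.isHermitian.sum_map_eigenvalues_hadamard_le hnB hnB_diag hAB.isHermitian
    (convexOn_rpow hα) hA.eigenvalues_nonneg

end Renyi

theorem renyiS_joint_ge_max_general {n : ℕ} {A B : Matrix (Fin n) (Fin n) ℝ}
    (hA : A.PosSemidef) (hB : B.PosSemidef)
    (hAtr : A.trace = 1) (hBtr : B.trace = 1)
    (hAd : ∀ i, A i i = 1 / n) (hBd : ∀ i, B i i = 1 / n)
    {α : ℝ} (hα : 1 < α) :
    max (renyiS α A) (renyiS α B) ≤
      renyiS α (((Matrix.hadamard A B).trace)⁻¹ • Matrix.hadamard A B) :=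
  max_le (renyiS_le_renyiS_normalized_hadamard hA hB hAtr hBd hα.le)
    (hadamard_comm B A ▸ renyiS_le_renyiS_normalized_hadamard hB hA hBtr hAd hα.le)

/-- the joint matrix-based Rényi entropy is at least each
marginal entropy. -/
theorem renyiS_joint_ge_max {n : ℕ} {A B : Matrix (Fin n) (Fin n) ℝ}
    (hA : A.PosSemidef) (hB : B.PosSemidef)
    (hApos : ∀ i j, 0 ≤ A i j) (hBpos : ∀ i j, 0 ≤ B i j)
    (hAtr : A.trace = 1) (hBtr : B.trace = 1)
    (hAd : ∀ i, A i i = 1 / n) (hBd : ∀ i, B i i = 1 / n)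
    {α : ℝ} (hα : 1 < α) :
    max (renyiS α A) (renyiS α B) ≤
      renyiS α (((Matrix.hadamard A B).trace)⁻¹ • Matrix.hadamard A B) :=
  renyiS_joint_ge_max_general hA hB hAtr hBtr hAd hBd hα
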